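/- arXiv:2002.01498 — 2 statements merged into one kernel-verified Lean document; each statement's English description precedes it below -/
import Mathlib

section
/- Let k ≥ 2 and let H be an n-vertex blow-up of the Andrásfai graph Γ_k with vertex classes V_0,...,V_{3k−2} and with independence number α(H) ≤ s. Then for every i (indices modulo 3k−1) one has (k−1)n − (3k−4)s ≤ |V_i| ≤ 3s − n. -/
/-!
Any `k` cyclically consecutive classes of `Γ_k` span an independent set, so each such window
of the blow-up has total size at most `s`. The windows starting at `i`, `i + k`, `i + 2k`
cover the `3k = (3k - 1) + 1` classes once each and `V_i` twice, whence `n + |V_i| ≤ 3s`.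
Summing all `3k - 1` windows counts every vertex `k` times; bounding the other `3k - 4` windows
by `s` gives `kn ≤ (3k - 4)s + n + |V_i|`.
-/

open Finset

/-- The Andrásfai graph `Γ_k`. -/
def andrasfai (k : ℕ) : SimpleGraph (Fin (3 * k - 1)) where
  Adj i j := i ≠ j ∧
    ((i.val + (3 * k - 1) - j.val) % (3 * k - 1) ∈ Finset.Icc k (2 * k - 1) ∨
     (j.val + (3 * k - 1) - i.val) % (3 * k - 1) ∈ Finset.Icc k (2 * k - 1))
  symm := ⟨fun _ _ h => ⟨h.1.symm, h.2.symm⟩⟩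
  loopless := ⟨fun _ h => h.1 rfl⟩

/-- The blow-up of a graph `F` with class sizes given by `w`. -/
def SimpleGraph.blowup {α : Type*} (F : SimpleGraph α) (w : α → ℕ) :
    SimpleGraph (Σ a, Fin (w a)) where
  Adj x y := F.Adj x.1 y.1
  symm := ⟨fun _ _ h => F.symm.symm _ _ h⟩
  loopless := ⟨fun x h => F.loopless.irrefl x.1 h⟩

open Fin.NatCast Fin.CommRing

theorem SimpleGraph.sum_le_of_blowup_indep {α : Type*} (F : SimpleGraph α) (w : α → ℕ) (s : ℕ)
    (hindep : ∀ S : Finset (Σ a, Fin (w a)),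
      (∀ x ∈ S, ∀ y ∈ S, ¬ (F.blowup w).Adj x y) → S.card ≤ s)
    (I : Finset α) (hI : ∀ a ∈ I, ∀ b ∈ I, ¬ F.Adj a b) : ∑ a ∈ I, w a ≤ s := by
  have hS : ∀ x ∈ I.sigma (fun _ => univ), ∀ y ∈ I.sigma (fun _ => univ),
      ¬ (F.blowup w).Adj x y := fun x hx y hy =>
    hI x.1 (mem_sigma.1 hx).1 y.1 (mem_sigma.1 hy).1
  simpa using hindep _ hS

section Window

variable {m : ℕ} [NeZero m]

theorem Fin.sum_range_add_natCast {M : Type*} [AddCommMonoid M] (g : Fin m → M) (a : Fin m) :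
    ∑ t ∈ range m, g (a + t) = ∑ x, g x := by
  rw [← Fin.sum_univ_eq_sum_range (fun t => g (a + t))]
  simp only [Fin.cast_val_eq_self]
  exact Equiv.sum_comp (Equiv.addLeft a) g

def windowSum (w : Fin m → ℕ) (k : ℕ) (a : Fin m) : ℕ :=
  ∑ t ∈ range k, w (a + t)

theorem sum_windowSum (w : Fin m → ℕ) (k : ℕ) : ∑ a, windowSum w k a = k * ∑ x, w x := by
  simp only [windowSum]
  rw [Finset.sum_comm]
  have hshift (t : ℕ) : ∑ a : Fin m, w (a + t) = ∑ x, w x :=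
    Equiv.sum_comp (Equiv.addRight (t : Fin m)) w
  simp only [hshift, sum_const, card_range, smul_eq_mul]

theorem windowSum_add_natCast (w : Fin m → ℕ) (k : ℕ) (a : Fin m) (j : ℕ) :
    windowSum w k (a + j) = ∑ t ∈ range k, w (a + (j + t : ℕ)) := by
  simp only [windowSum, Nat.cast_add, add_assoc]

theorem sum_three_windowSum_eq {k : ℕ} (hm : m + 1 = 3 * k) (w : Fin m → ℕ) (a : Fin m) :
    ∑ j ∈ {0, k, 2 * k}, windowSum w k (a + j) = ∑ x, w x + w a := by
  have hcover : ∑ t ∈ range (3 * k), w (a + t) = ∑ x, w x + w a := by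
    rw [← hm, sum_range_succ, Fin.sum_range_add_natCast, Fin.natCast_self, add_zero]
  rw [sum_insert (by simp; omega), sum_insert (by simp; omega), sum_singleton, ← hcover,
    show 3 * k = k + k + k by ring, sum_range_add, sum_range_add, windowSum_add_natCast,
    windowSum_add_natCast, windowSum_add_natCast, two_mul]
  simp only [zero_add, add_assoc]

theorem sum_add_le_of_windowSum_le {k s : ℕ} (hm : m + 1 = 3 * k) (w : Fin m → ℕ)
    (hT : ∀ a, windowSum w k a ≤ s) (a : Fin m) : ∑ x, w x + w a ≤ 3 * s :=
  calc ∑ x, w x + w a = ∑ j ∈ {0, k, 2 * k}, windowSum w k (a + j) :=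
        (sum_three_windowSum_eq hm w a).symm
    _ ≤ #({0, k, 2 * k} : Finset ℕ) • s := sum_le_card_nsmul _ _ _ fun _ _ => hT _
    _ ≤ 3 * s := Nat.mul_le_mul_right _ card_le_three

theorem mul_sum_le_of_windowSum_le {k s : ℕ} (hm : m + 1 = 3 * k) (hk : 2 ≤ k) (w : Fin m → ℕ)
    (hT : ∀ a, windowSum w k a ≤ s) (a : Fin m) :
    k * ∑ x, w x ≤ (m - 3) * s + (∑ x, w x + w a) := by
  set J : Finset ℕ := {0, k, 2 * k}
  have hJ : J ⊆ range m := by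
    simp only [J, insert_subset_iff, singleton_subset_iff, mem_range]
    omega
  have hJcard : #J = 3 := by
    rw [card_insert_of_notMem (by simp; omega), card_insert_of_notMem (by simp; omega),
      card_singleton]
  calc k * ∑ x, w x = ∑ j ∈ range m, windowSum w k (a + j) := by
        rw [Fin.sum_range_add_natCast (windowSum w k), sum_windowSum]
    _ = ∑ j ∈ range m \ J, windowSum w k (a + j) + ∑ j ∈ J, windowSum w k (a + j) :=
        (sum_sdiff hJ).symm
    _ ≤ #(range m \ J) • s + (∑ x, w x + w a) :=
        add_le_add (sum_le_card_nsmul _ _ _ fun _ _ => hT _) (sum_three_windowSum_eq hm w a).le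
    _ = (m - 3) * s + (∑ x, w x + w a) := by
        rw [card_sdiff_of_subset hJ, card_range, hJcard, smul_eq_mul]

end Window

theorem Fin.val_add_sub_mod {m : ℕ} (x y : Fin m) : (x.val + m - y.val) % m = (x - y).val := by
  rw [Fin.val_sub]
  congr 1
  omega

theorem andrasfai_not_adj_add_natCast {k : ℕ} [NeZero (3 * k - 1)] (a : Fin (3 * k - 1))
    {t₁ t₂ : ℕ} (h₁ : t₁ < k) (h₂ : t₂ < k) : ¬ (andrasfai k).Adj (a + t₁) (a + t₂) := by
  have hdist {u v : ℕ} (hu : u < k) (hv : v < k) :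
      ((a + u : Fin (3 * k - 1)) - (a + v)).val ∉ Icc k (2 * k - 1) := by
    rw [add_sub_add_left_eq_sub, mem_Icc]
    have hu' : ((u : Fin (3 * k - 1)) : ℕ) = u := Fin.val_cast_of_lt (by omega)
    have hv' : ((v : Fin (3 * k - 1)) : ℕ) = v := Fin.val_cast_of_lt (by omega)
    rcases le_or_gt v u with huv | huv
    · rw [Fin.coe_sub_iff_le.2 (Fin.le_def.2 (by omega)), hu', hv']
      omega
    · rw [Fin.coe_sub_iff_lt.2 (Fin.lt_def.2 (by omega)), hu', hv']
      omega
  rintro ⟨-, h | h⟩ <;> rw [Fin.val_add_sub_mod] at h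
  exacts [hdist h₁ h₂ h, hdist h₂ h₁ h]

theorem andrasfai_windowSum_le {k : ℕ} [NeZero (3 * k - 1)] (w : Fin (3 * k - 1) → ℕ) (s : ℕ)
    (hindep : ∀ S : Finset (Σ i, Fin (w i)),
      (∀ a ∈ S, ∀ b ∈ S, ¬ ((andrasfai k).blowup w).Adj a b) → S.card ≤ s)
    (a : Fin (3 * k - 1)) : windowSum w k a ≤ s := by
  have hkm : k < 3 * k - 1 := by have := NeZero.ne (3 * k - 1); omega
  have hinj : Set.InjOn (fun t : ℕ => a + (t : Fin (3 * k - 1))) (range k) := by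
    intro t₁ h₁ t₂ h₂ h
    simp only [coe_range, Set.mem_Iio] at h₁ h₂
    have := congrArg Fin.val (add_left_cancel h)
    rwa [Fin.val_cast_of_lt (by omega), Fin.val_cast_of_lt (by omega)] at this
  have hI : ∀ x ∈ (range k).image fun t : ℕ => a + t, ∀ y ∈ (range k).image fun t : ℕ => a + t,
      ¬ (andrasfai k).Adj x y := by
    simp only [mem_image, mem_range]
    rintro _ ⟨t₁, h₁, rfl⟩ _ ⟨t₂, h₂, rfl⟩
    exact andrasfai_not_adj_add_natCast a h₁ h₂
  have := (andrasfai k).sum_le_of_blowup_indep w s hindep _ hI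
  rwa [sum_image hinj] at this

/-- If `k ≥ 2` and `H` is an `n`-vertex blow-up of `Γ_k` with vertex classes of
sizes `w i` and independence number at most `s`, then for every `i` one has
`(k-1)n - (3k-4)s ≤ |V_i| ≤ 3s - n`. -/
theorem stmt_10 (k : ℕ) (hk : 2 ≤ k) (w : Fin (3 * k - 1) → ℕ) (n s : ℕ)
    (hn : n = ∑ i, w i)
    (hindep : ∀ S : Finset (Σ i, Fin (w i)),
      (∀ a ∈ S, ∀ b ∈ S, ¬ ((andrasfai k).blowup w).Adj a b) → S.card ≤ s) :
    ∀ i, ((k : ℤ) - 1) * n - (3 * (k : ℤ) - 4) * s ≤ (w i : ℤ) ∧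
      (w i : ℤ) ≤ 3 * (s : ℤ) - n := by
  intro i
  have : NeZero (3 * k - 1) := ⟨by omega⟩
  have hm : 3 * k - 1 + 1 = 3 * k := by omega
  have hT := andrasfai_windowSum_le w s hindep
  have upper := sum_add_le_of_windowSum_le hm w hT i
  have lower := mul_sum_le_of_windowSum_le hm hk w hT i
  rw [← hn] at upper lower
  rw [show 3 * k - 1 - 3 = 3 * k - 4 by omega] at lower
  refine ⟨?_, by omega⟩
  zify [show 4 ≤ 3 * k by omega] at lower
  linarith
end

section
/- For integers k ≥ 2 and n with kn/(3k−1) an integer, the balanced blow-up Γ_k(p) of the Andrásfai graph Γ_k with classes of size p = n/(3k−1) is a triangle-free graph on n vertices with independence number exactly kp = kn/(3k−1) and exactly g_k(n, kn/(3k−1)) = kn²/(2(3k−1)) edges. -/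
open Finset

/-!
`Γ_k` is the Cayley graph of `ℤ/(3k-1)` with the symmetric connection set `C = [k, 2k-1]`.
It is triangle-free because `C + C` misses `C` modulo `3k-1`, and it is `k`-regular. A
neighbourhood is independent, so `α(Γ_k) ≥ k`; an independent set translated to contain `0`
lies in `[0, k) ∪ [2k, 3k-1)`, and since `2k-1 ∈ C` is a forbidden difference, shifting the
upper part down by `2k-1` maps it injectively into `[0, k)`, so `α(Γ_k) ≤ k`. Blowing up by
`p` preserves clique-freeness and multiplies the independence number and all degrees by `p`,
which gives `2 |E| = (3k-1)p · kp`.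
-/

theorem Fin.val_sub_eq_ite {n : ℕ} (a b : Fin n) :
    (a - b).val = if b ≤ a then a.val - b.val else n + a.val - b.val := by
  split_ifs with h
  · exact Fin.coe_sub_iff_le.2 h
  · exact Fin.coe_sub_iff_lt.2 (not_le.1 h)

namespace SimpleGraph

variable {α : Type*}

section

variable {G : SimpleGraph α}

theorem isIndepSet_iff_forall_not_adj {s : Set α} :
    G.IsIndepSet s ↔ ∀ a ∈ s, ∀ b ∈ s, ¬G.Adj a b :=
  ⟨fun h _ ha _ hb hab => h ha hb hab.ne hab, fun h _ ha _ hb _ => h _ ha _ hb⟩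

theorem indepNum_eq_of_forall_card_le [Finite α] {m : ℕ}
    (hle : ∀ s : Finset α, G.IsIndepSet s → #s ≤ m)
    (hex : ∃ s : Finset α, G.IsIndepSet s ∧ #s = m) : G.indepNum = m := by
  obtain ⟨s, hs⟩ := G.exists_isNIndepSet_indepNum
  obtain ⟨t, ht, rfl⟩ := hex
  exact le_antisymm (hs.card_eq ▸ hle s hs.isIndepSet) ht.card_le_indepNum

theorem IsRegularOfDegree.two_mul_card_edgeFinset [Fintype α] [DecidableRel G.Adj] {d : ℕ}
    (h : G.IsRegularOfDegree d) : 2 * #G.edgeFinset = Fintype.card α * d := by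
  rw [← sum_degrees_eq_twice_card_edges, Finset.sum_congr rfl fun v _ => h.degree_eq v,
    sum_const, card_univ, smul_eq_mul]

end

section Blowup

variable {F : SimpleGraph α}

@[simp]
theorem blowup_adj {w : α → ℕ} {x y : Σ a, Fin (w a)} :
    (F.blowup w).Adj x y ↔ F.Adj x.1 y.1 :=
  Iff.rfl

theorem CliqueFree.blowup {n : ℕ} (h : F.CliqueFree n) (w : α → ℕ) :
    (F.blowup w).CliqueFree n := by
  classical
  intro s hs
  have hinj : Set.InjOn Sigma.fst (s : Set (Σ a, Fin (w a))) := fun x hx y hy hxy => by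
    by_contra hne
    exact (blowup_adj.1 (hs.isClique hx hy hne)).ne hxy
  refine h (s.image Sigma.fst) ⟨?_, by rw [card_image_of_injOn hinj, hs.card_eq]⟩
  rw [coe_image]
  rintro _ ⟨x, hx, rfl⟩ _ ⟨y, hy, rfl⟩ hne
  exact hs.isClique hx hy fun hxy => hne (congrArg Sigma.fst hxy)

theorem isIndepSet_blowup_sigma {w : α → ℕ} {t : Finset α} (ht : F.IsIndepSet t) :
    (F.blowup w).IsIndepSet (t.sigma fun _ => univ : Finset (Σ a, Fin (w a))) := by
  intro x hx y hy _ hxy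
  simp only [coe_sigma, Set.mem_sigma_iff, coe_univ, Set.mem_univ, and_true, mem_coe] at hx hy
  exact ht hx hy (blowup_adj.1 hxy).ne hxy

theorem indepNum_blowup [Finite α] (p : ℕ) :
    (F.blowup fun _ => p).indepNum = F.indepNum * p := by
  classical
  apply indepNum_eq_of_forall_card_le
  · intro s hs
    have hfst : F.IsIndepSet (s.image Sigma.fst) := by
      rw [coe_image]
      rintro _ ⟨x, hx, rfl⟩ _ ⟨y, hy, rfl⟩ _
      exact isIndepSet_iff_forall_not_adj.1 hs x hx y hy
    calc #s ≤ #((s.image Sigma.fst).sigma fun _ => (univ : Finset (Fin p))) :=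
          card_le_card fun x hx => mem_sigma.2 ⟨mem_image_of_mem _ hx, mem_univ _⟩
      _ = #(s.image Sigma.fst) * p := by simp
      _ ≤ F.indepNum * p := Nat.mul_le_mul_right p hfst.card_le_indepNum
  · obtain ⟨t, ht⟩ := F.exists_isNIndepSet_indepNum
    exact ⟨_, isIndepSet_blowup_sigma ht.isIndepSet, by simp [ht.card_eq]⟩

theorem degree_blowup [F.LocallyFinite] (p : ℕ) (v : Σ _ : α, Fin p)
    [Fintype ((F.blowup fun _ => p).neighborSet v)] :
    (F.blowup fun _ => p).degree v = F.degree v.1 * p := by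
  classical
  have hN : (F.blowup fun _ => p).neighborFinset v =
      (F.neighborFinset v.1).sigma fun _ => univ := by
    ext x
    simp
  rw [← card_neighborFinset_eq_degree, hN, ← card_neighborFinset_eq_degree]
  simp

theorem IsRegularOfDegree.blowup [F.LocallyFinite] {d : ℕ} (h : F.IsRegularOfDegree d) (p : ℕ)
    [(F.blowup fun _ => p).LocallyFinite] :
    (F.blowup fun _ => p).IsRegularOfDegree (d * p) := fun v => by
  rw [degree_blowup, h.degree_eq]

end Blowup

end SimpleGraph

section Andrasfai

open SimpleGraph

variable {k : ℕ}

theorem andrasfai_adj_iff (a b : Fin (3 * k - 1)) :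
    (andrasfai k).Adj a b ↔ (b - a).val ∈ Icc k (2 * k - 1) := by
  have hmod (i j : Fin (3 * k - 1)) :
      (i.val + (3 * k - 1) - j.val) % (3 * k - 1) = (i - j).val := by
    rw [Fin.val_sub]
    congr 1
    omega
  simp only [andrasfai, hmod, mem_Icc, ne_eq, Fin.ext_iff, Fin.val_sub_eq_ite, Fin.le_def]
  split_ifs <;> omega

theorem andrasfai_cliqueFree_three (k : ℕ) : (andrasfai k).CliqueFree 3 := by
  intro s hs
  obtain ⟨a, b, c, hab, hac, hbc, -⟩ := is3Clique_iff.1 hs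
  simp only [andrasfai_adj_iff, mem_Icc, Fin.val_sub_eq_ite, Fin.le_def] at hab hac hbc
  split_ifs at hab hac hbc <;> omega

theorem andrasfai_card_le_of_isIndepSet {s : Finset (Fin (3 * k - 1))}
    (hs : (andrasfai k).IsIndepSet s) : #s ≤ k := by
  obtain rfl | ⟨a, ha⟩ := s.eq_empty_or_nonempty
  · simp
  have : NeZero (3 * k - 1) := ⟨a.pos.ne'⟩
  let d : Fin (3 * k - 1) → ℕ := fun x => (x - a).val
  have hgap : ∀ x ∈ s, ∀ y ∈ s, d x ≤ d y → d y - d x ∉ Icc k (2 * k - 1) := by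
    intro x hx y hy hle
    rw [← Fin.coe_sub_iff_le.2 hle, sub_sub_sub_cancel_right, ← andrasfai_adj_iff]
    exact isIndepSet_iff_forall_not_adj.1 hs x hx y hy
  have hd : ∀ x ∈ s, d x ∉ Icc k (2 * k - 1) := fun x hx => by
    simpa [d] using hgap a ha x hx (by simp [d])
  let f : Fin (3 * k - 1) → ℕ := fun x => if d x < k then d x else d x - (2 * k - 1)
  calc #s ≤ #(range k) := card_le_card_of_injOn f ?_ ?_
    _ = k := card_range k
  · intro x hx
    have hdx := hd x hx
    have hlt : d x < 3 * k - 1 := (x - a).isLt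
    simp only [f, coe_range, Set.mem_Iio, mem_Icc] at hdx ⊢
    split_ifs <;> omega
  · intro x hx y hy hxy
    have hdxy : d x = d y := by
      have hgap_xy := hgap x hx y hy
      have hgap_yx := hgap y hy x hx
      have hdx := hd x hx
      have hdy := hd y hy
      simp only [f, mem_Icc] at hxy hgap_xy hgap_yx hdx hdy
      split_ifs at hxy <;> omega
    exact sub_left_inj.1 (Fin.ext hdxy)

theorem andrasfai_isRegularOfDegree (k : ℕ) [(andrasfai k).LocallyFinite] :
    (andrasfai k).IsRegularOfDegree k := by
  intro a
  have : NeZero (3 * k - 1) := ⟨a.pos.ne'⟩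
  have hk : 2 * k - 1 < 3 * k - 1 := by have := a.pos; omega
  rw [← card_neighborFinset_eq_degree]
  calc #((andrasfai k).neighborFinset a)
      = #(Icc (⟨k, by omega⟩ : Fin (3 * k - 1)) ⟨2 * k - 1, hk⟩) := by
        refine card_nbij' (· - a) (a + ·) ?_ ?_ ?_ ?_ <;> intro x hx <;>
          simp_all [andrasfai_adj_iff, Fin.le_def]
    _ = k := by rw [Fin.card_Icc, Fin.val_mk, Fin.val_mk]; omega

theorem andrasfai_indepNum (hk : 0 < k) : (andrasfai k).indepNum = k := by
  refine indepNum_eq_of_forall_card_le (fun _ => andrasfai_card_le_of_isIndepSet) ?_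
  classical
  let a : Fin (3 * k - 1) := ⟨0, by omega⟩
  refine ⟨(andrasfai k).neighborFinset a, ?_, ?_⟩
  · rw [coe_neighborFinset]
    exact isIndepSet_neighborSet_of_triangleFree _ (andrasfai_cliqueFree_three k) a
  · rw [card_neighborFinset_eq_degree, (andrasfai_isRegularOfDegree k).degree_eq]

end Andrasfai

open scoped Classical in
/-- For `k ≥ 2` and `n = (3k-1)p` (so that `kn/(3k-1) = kp` is an integer), the
balanced blow-up `Γ_k(p)` is a triangle-free graph on `n` vertices with
independence number exactly `kp = kn/(3k-1)` and exactly
`g_k(n, kn/(3k-1)) = kn²/(2(3k-1))` edges. -/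
theorem stmt_12 (k p n : ℕ) (hk : 2 ≤ k) (hn : n = (3 * k - 1) * p) :
    (((andrasfai k).blowup fun _ => p).CliqueFree 3) ∧
    Fintype.card (Σ _i : Fin (3 * k - 1), Fin p) = n ∧
    ((∃ S : Finset (Σ _i : Fin (3 * k - 1), Fin p),
        (∀ a ∈ S, ∀ b ∈ S, ¬ ((andrasfai k).blowup fun _ => p).Adj a b) ∧
        S.card = k * p) ∧
      (∀ S : Finset (Σ _i : Fin (3 * k - 1), Fin p),
        (∀ a ∈ S, ∀ b ∈ S, ¬ ((andrasfai k).blowup fun _ => p).Adj a b) →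
        S.card ≤ k * p)) ∧
    2 * (3 * k - 1) * ((andrasfai k).blowup fun _ => p).edgeFinset.card
      = k * n ^ 2 := by
  have hind (S : Finset (Σ _i : Fin (3 * k - 1), Fin p)) :
      (∀ a ∈ S, ∀ b ∈ S, ¬ ((andrasfai k).blowup fun _ => p).Adj a b) ↔
        ((andrasfai k).blowup fun _ => p).IsIndepSet S :=
    SimpleGraph.isIndepSet_iff_forall_not_adj.symm
  have hα : ((andrasfai k).blowup fun _ => p).indepNum = k * p := by
    rw [SimpleGraph.indepNum_blowup, andrasfai_indepNum (by omega)]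
  refine ⟨(andrasfai_cliqueFree_three k).blowup _, by simp [hn, mul_comm], ⟨?_, ?_⟩, ?_⟩
  · obtain ⟨S, hS⟩ := ((andrasfai k).blowup fun _ => p).exists_isNIndepSet_indepNum
    exact ⟨S, (hind S).2 hS.isIndepSet, hS.card_eq.trans hα⟩
  · exact fun S hS => hα ▸ ((hind S).1 hS).card_le_indepNum
  · have hE := ((andrasfai_isRegularOfDegree k).blowup p).two_mul_card_edgeFinset
    rw [Fintype.card_sigma, sum_const, card_univ, Fintype.card_fin, Fintype.card_fin,
      smul_eq_mul] at hE
    rw [hn, mul_right_comm, hE]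
    ring
end
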